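/- If 0 < t1 < t1' < 1/4 then t_{0,crit}(t1') < t_{0,crit}(t1); that is, the function t1 ↦ t_{0,crit}(t1) is strictly decreasing on the interval (0, 1/4). -/

import Mathlib

/-!
In the coordinates `u = 1 - 4 t`, `w = 8 s`, the greatest root of `p1 t` lies in the region
`u ^ 2 ≤ w`, and there `∂p1/∂t = (w - u²)(192 w + 192 u² + 48 u) + 192 (u · 4t)² > 0`.
So if `tc ≤ tc'`, then `p1 t1 tc' < p1 t1' tc' = 0`, and the intermediate value theorem
produces a root of `p1 t1` above `tc'`, contradicting the maximality of `tc`.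
-/

noncomputable section

/-- The cubic polynomial `p1` whose greatest real root is `t_{0,crit}(t1)`. -/
def p1 (t1 s : ℝ) : ℝ :=
  8192*s^3 + 192*(64*t1 - 7)*s^2 - 48*(1 - 4*t1)^2*s + (108*t1 - 11)*(4*t1 - 1)^3

open Filter

lemma lt_of_neg_of_isGreatest_zeros {f : ℝ → ℝ} {c x : ℝ} (hf : Continuous f)
    (hpos : ∀ᶠ s in atTop, 0 < f s) (hc : IsGreatest {s | f s = 0} c) (hx : f x < 0) :
    x < c := by
  obtain ⟨X, hX, hxX⟩ := (hpos.and (eventually_gt_atTop x)).exists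
  obtain ⟨r, hr, hfr⟩ := intermediate_value_Ioo hxX.le hf.continuousOn ⟨hx, hX⟩
  exact hr.1.trans_le (hc.2 hfr)

def p1Rescaled (u w : ℝ) : ℝ :=
  27*u^4 + 16*w^3 - 48*u*w^2 - 6*u^2*w - 16*u^3 + 27*w^2

lemma p1_eq_p1Rescaled (t s : ℝ) : p1 t s = p1Rescaled (1 - 4*t) (8*s) := by
  unfold p1 p1Rescaled
  ring

lemma p1Rescaled_pos {u w : ℝ} (hu0 : 0 < u) (hu1 : u < 1) (hw : 8 ≤ w) :
    0 < p1Rescaled u w := by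
  unfold p1Rescaled
  nlinarith [mul_le_mul_of_nonneg_right hw (sq_nonneg w),
    mul_le_mul_of_nonneg_right hu1.le (sq_nonneg w), pow_lt_one₀ hu0.le hu1 (n := 3) (by norm_num),
    pow_pos hu0 4, mul_pos hu0 hu0]

/-- If `w < u ^ 2`, then `u ^ 4 - 2 u w ^ 2 + w ^ 3 > 0` and the identity `key` forces `u < w`,
which is impossible since `u ^ 2 < u`. -/
lemma sq_le_of_p1Rescaled_eq_zero {u w : ℝ} (hu0 : 0 < u) (hu1 : u < 1) (hw0 : 0 < w)
    (hlin : 0 < 1 - 2*u + w) (hroot : p1Rescaled u w = 0) : u^2 ≤ w := by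
  by_contra! hlt
  have hwu : w < u := by nlinarith
  have hquartic : 0 < u^4 - 2*u*w^2 + w^3 := by
    nlinarith [mul_pos hw0 (by linarith : 0 < u^2 - w), mul_pos hu0 hw0,
      mul_pos (mul_pos hu0 hw0) (by linarith : 0 < 1 - u), sq_nonneg (u^2 - w)]
  have key : 27*(1 - 2*u + w)*(u^4 - 2*u*w^2 + w^3)
      = (w - u)^3*(11*w + 5*u) + (w - 2*u)*p1Rescaled u w := by
    unfold p1Rescaled
    ring
  have hlhs : 0 < 27*(1 - 2*u + w)*(u^4 - 2*u*w^2 + w^3) := by positivity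
  have hrhs : (w - u)^3*(11*w + 5*u) < 0 :=
    mul_neg_of_neg_of_pos (Odd.pow_neg (by decide) (by linarith)) (by linarith)
  rw [hroot, mul_zero, add_zero] at key
  linarith

section GreatestRoot

variable {t c : ℝ}

lemma continuous_p1 : Continuous (p1 t) := by
  unfold p1
  fun_prop

lemma p1_pos_of_one_le {s : ℝ} (ht0 : 0 < t) (ht : t < 1/4) (hs : 1 ≤ s) : 0 < p1 t s := by
  rw [p1_eq_p1Rescaled]
  exact p1Rescaled_pos (by linarith) (by linarith) (by linarith)

lemma lt_of_p1_neg (ht0 : 0 < t) (ht : t < 1/4) (hc : IsGreatest {s | p1 t s = 0} c)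
    {x : ℝ} (hx : p1 t x < 0) : x < c :=
  lt_of_neg_of_isGreatest_zeros continuous_p1
    ((eventually_ge_atTop 1).mono fun _ hs ↦ p1_pos_of_one_le ht0 ht hs) hc hx

lemma pos_and_gt_of_isGreatest_p1 (ht0 : 0 < t) (ht : t < 1/4)
    (hc : IsGreatest {s | p1 t s = 0} c) : 0 < c ∧ 1/8 - t < c := by
  have h_eighth : t < 4/27 → p1 t (1/8 - t) < 0 := fun h ↦ by
    have : p1 t (1/8 - t) = t^3 * (6912*t - 1024) := by unfold p1; ring
    rw [this]
    exact mul_neg_of_pos_of_neg (by positivity) (by linarith)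
  have h_zero : 11/108 < t → p1 t 0 < 0 := fun h ↦ by
    have : p1 t 0 = (108*t - 11) * (4*t - 1)^3 := by unfold p1; ring
    rw [this]
    exact mul_neg_of_pos_of_neg (by linarith) (Odd.pow_neg (by decide) (by linarith))
  have hpos : 0 < c := by
    rcases le_or_gt t (11/108) with h | h
    · linarith [lt_of_p1_neg ht0 ht hc (h_eighth (by linarith))]
    · exact lt_of_p1_neg ht0 ht hc (h_zero h)
  refine ⟨hpos, ?_⟩
  rcases lt_or_ge t (4/27) with h | h
  · exact lt_of_p1_neg ht0 ht hc (h_eighth h)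
  · linarith

lemma sq_one_sub_four_mul_le_of_isGreatest_p1 (ht0 : 0 < t) (ht : t < 1/4)
    (hc : IsGreatest {s | p1 t s = 0} c) : (1 - 4*t)^2 ≤ 8*c := by
  obtain ⟨hc0, hc1⟩ := pos_and_gt_of_isGreatest_p1 ht0 ht hc
  have hroot : p1Rescaled (1 - 4*t) (8*c) = 0 := p1_eq_p1Rescaled t c ▸ hc.1
  exact sq_le_of_p1Rescaled_eq_zero (by linarith) (by linarith) (by linarith) (by linarith) hroot

end GreatestRoot

lemma hasDerivAt_p1_left (s τ : ℝ) : HasDerivAt (fun t ↦ p1 t s)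
    ((8*s - (1 - 4*τ)^2) * (1536*s + 192*(1 - 4*τ)^2 + 48*(1 - 4*τ))
      + 192*((1 - 4*τ)*(4*τ))^2) τ := by
  have hid := hasDerivAt_id' τ
  have h := (((hasDerivAt_const τ (8192*s^3)).add
    ((((hid.const_mul 64).sub_const 7).const_mul 192).mul_const (s^2))).sub
    ((((hid.const_mul 4).const_sub 1).pow 2).const_mul 48 |>.mul_const s)).add
    (((hid.const_mul 108).sub_const 11).mul (((hid.const_mul 4).sub_const 1).pow 3))
  refine h.congr_deriv ?_
  simp only [Pi.pow_apply]
  push_cast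
  ring

lemma p1_lt_p1_of_lt {t t' s : ℝ} (ht0 : 0 < t) (htt' : t < t') (ht' : t' < 1/4)
    (hs : (1 - 4*t)^2 ≤ 8*s) : p1 t s < p1 t' s := by
  have hmono : StrictMonoOn (fun τ ↦ p1 τ s) (Set.Icc t t') := by
    refine strictMonoOn_of_deriv_pos (convex_Icc t t')
      (fun τ _ ↦ (hasDerivAt_p1_left s τ).continuousAt.continuousWithinAt) fun x hx ↦ ?_
    rw [interior_Icc] at hx
    obtain ⟨hx1, hx2⟩ := hx
    rw [(hasDerivAt_p1_left s x).deriv]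
    have hu : 0 < 1 - 4*x := by linarith
    have hbranch : 0 ≤ 8*s - (1 - 4*x)^2 := by nlinarith
    have hfactor : 0 ≤ 1536*s + 192*(1 - 4*x)^2 + 48*(1 - 4*x) := by nlinarith
    have hsq : 0 < (1 - 4*x)*(4*x) := mul_pos hu (by linarith)
    positivity
  exact hmono (Set.left_mem_Icc.2 htt'.le) (Set.right_mem_Icc.2 htt'.le) htt'

/-- The function `t1 ↦ t_{0,crit}(t1)` is strictly decreasing on `(0, 1/4)`:
if `0 < t1 < t1' < 1/4` and `tc`, `tc'` are the greatest real roots of `p1` for the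
parameters `t1`, `t1'` respectively, then `tc' < tc`. -/
theorem t0crit_strictly_decreasing (t1 t1' tc tc' : ℝ)
    (ht1 : 0 < t1) (h12 : t1 < t1') (ht1' : t1' < 1/4)
    (htc : IsGreatest {s : ℝ | p1 t1 s = 0} tc)
    (htc' : IsGreatest {s : ℝ | p1 t1' s = 0} tc') :
    tc' < tc := by
  have ht1_lt : t1 < 1/4 := h12.trans ht1'
  by_contra! h
  have hbranch : (1 - 4*t1)^2 ≤ 8*tc' :=
    (sq_one_sub_four_mul_le_of_isGreatest_p1 ht1 ht1_lt htc).trans (by linarith)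
  have hneg : p1 t1 tc' < 0 := htc'.1 ▸ p1_lt_p1_of_lt ht1 h12 ht1' hbranch
  exact h.not_gt (lt_of_p1_neg ht1 ht1_lt htc hneg)
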